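/- arXiv:2307.00605 — 2 statements merged into one kernel-verified Lean document; each statement's English description precedes it below -/
import Mathlib

section
/- For every f ∈ M and t ≥ 0, u^f(t) = −f(t) + ∫₀ᵗ k_{t−s}(T) f'''(s) ds, where for τ ∈ ℝ, k_τ : [0,∞) → ℝ is the continuous function k_τ(x) := x(1 − cos(τ/√x)) for x > 0, k_τ(0) := 0, and k_τ(T) is the bounded operator obtained from T by the continuous functional calculus (formally k_τ(T) = L^{−1}(I − cos(τL^{1/2}))). Moreover, the summand ∫₀ᵗ k_{t−s}(T) f'''(s) ds belongs to dom L. -/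
open MeasureTheory
open scoped ComplexInnerProductSpace

variable {H : Type*} [NormedAddCommGroup H] [InnerProductSpace ℂ H] [CompleteSpace H]

/-- `Iᵗ = L^{-1/2}·sin(t·L^{1/2})`, realized by applying the continuous functional calculus of
the bounded positive self-adjoint operator `T = L⁻¹` to the continuous function
`hₜ(x) = √x·sin(t/√x)` (for `x > 0`, extended by `0` at `x ≤ 0`). -/
noncomputable def waveOp (T : H →L[ℂ] H) (t : ℝ) : H →L[ℂ] H :=
  cfc (fun x : ℝ => if 0 < x then Real.sqrt x * Real.sin (t / Real.sqrt x) else 0) T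

/-- The class `M` of smooth controls: smooth `K`-valued functions of time vanishing near `t = 0`
(all time functions are extended by zero to `t < 0`). -/
def IsSmoothControl (K : Submodule ℂ H) (f : ℝ → H) : Prop :=
  ContDiff ℝ (⊤ : ℕ∞) f ∧ (∀ t, f t ∈ K) ∧ ∃ ε > 0, ∀ t ≤ ε, f t = 0

/-- The wave `u^f(t) = -f(t) + ∫₀ᵗ I^{t-s} f''(s) ds` (Bochner integral). -/
noncomputable def wave (T : H →L[ℂ] H) (f : ℝ → H) (t : ℝ) : H :=
  -f t + ∫ s in (0:ℝ)..t, waveOp T (t - s) (deriv (deriv f) s)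

/-- The context of the paper: `L₀` is a closed, densely defined, symmetric, positive definite
operator in the Hilbert space `H`; `L` is its Friedrichs (self-adjoint) extension,
`L₀ ⊆ L ⊆ L₀*`, with an everywhere defined bounded self-adjoint positive injective inverse `T`;
`K = ker L₀*`.  The boundary operators are `Γ₁y = T(L₀*y) − y` and `Γ₂y = P(L₀*y)`, where `P`
is the orthogonal projection onto `K`. -/
structure Setting (L₀ L : H →ₗ.[ℂ] H) (T : H →L[ℂ] H) (K : Submodule ℂ H) : Prop where
  dense_domain : Dense (L₀.domain : Set H)
  closed : L₀.IsClosed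
  symmetric : ∀ x y : L₀.domain, ⟪L₀ x, (y : H)⟫ = ⟪(x : H), L₀ y⟫
  posdef : ∃ γ : ℝ, 0 < γ ∧ ∀ x : L₀.domain, γ * ‖(x : H)‖ ^ 2 ≤ (⟪L₀ x, (x : H)⟫).re
  extension : L₀ ≤ L
  le_adjoint : L ≤ L₀.adjoint
  selfadjoint : L.adjoint = L
  T_selfadjoint : IsSelfAdjoint T
  T_positive : ∀ x : H, 0 ≤ (⟪T x, x⟫).re
  T_injective : Function.Injective T
  T_inv_left : ∀ x : L.domain, T (L x) = x
  T_mem_domain : ∀ y : H, T y ∈ L.domain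
  T_inv_right : ∀ y : H, ∀ hy : T y ∈ L.domain, L ⟨T y, hy⟩ = y
  kernel : ∀ x : H, x ∈ K ↔ ∃ hx : x ∈ L₀.adjoint.domain, L₀.adjoint ⟨x, hx⟩ = 0

/-- The reachable set `U^τ = {u^f(τ) : f ∈ M}` for `τ ≥ 0`, and `{0}` for `τ < 0`. -/
def reachSet (K : Submodule ℂ H) (T : H →L[ℂ] H) (τ : ℝ) : Set H :=
  if 0 ≤ τ then {x | ∃ f, IsSmoothControl K f ∧ wave T f τ = x} else {0}

/-- The total reachable set `U = span ⋃_{τ>0} U^τ`. -/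
def reachSpan (K : Submodule ℂ H) (T : H →L[ℂ] H) : Submodule ℂ H :=
  Submodule.span ℂ (⋃ τ ∈ Set.Ioi (0:ℝ), reachSet K T τ)

/-- The wave `v^ψ(t) = ∫₀ᵗ I^{t-s} ψ(s) ds` produced by a source `ψ` in system `β`. -/
noncomputable def sourceWave (T : H →L[ℂ] H) (ψ : ℝ → H) (t : ℝ) : H :=
  ∫ s in (0:ℝ)..t, waveOp T (t - s) (ψ s)

/-- `k_τ(T) = L⁻¹(I − cos(τ·L^{1/2}))`, realized by applying the continuous functional calculus
of `T = L⁻¹` to the continuous function `k_τ(x) = x·(1 − cos(τ/√x))` (for `x > 0`, extended by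
`0` at `x ≤ 0`). -/
noncomputable def cosOp (T : H →L[ℂ] H) (τ : ℝ) : H →L[ℂ] H :=
  cfc (fun x : ℝ => if 0 < x then x * (1 - Real.cos (τ / Real.sqrt x)) else 0) T

/-!
In the variable `r = √x` the kernels are `h_τ(r) = r sin(τ/r)`, `k_τ(r) = r²(1 - cos(τ/r))`
and `K_τ(r) = r²(τ - h_τ(r))`, with `∂_τ k_τ = h_τ`, `∂_τ K_τ = k_τ` and `k_0 = K_0 = 0`.
The τ-derivatives `h_τ` and `k_τ` are Lipschitz in `τ` uniformly for `r` in the (bounded)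
spectrum, so the functional calculus yields operator families with `d/dσ k_σ(T) = I^σ` and
`d/dσ K_σ(T) = k_σ(T)` in operator norm. As `f` vanishes near `0`, two integrations by parts
in the convolution give `∫ I^{t-s} f'' = ∫ k_{t-s}(T) f''' = ∫ K_{t-s}(T) f''''`. Finally
`K_τ(T) = T (τ - I^τ)`, so the last integral lies in the range of `T`, which is `dom L`.
-/

open Filter Topology

theorem Continuous.mul_of_norm_le_of_continuousAt {X R : Type*} [TopologicalSpace X]
    [NormedRing R] {f g : X → R} (hf : Continuous f) (hg : ∀ x, f x ≠ 0 → ContinuousAt g x)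
    {C : ℝ} (hC : ∀ x, ‖g x‖ ≤ C) : Continuous fun x => f x * g x := by
  refine continuous_iff_continuousAt.2 fun x => ?_
  by_cases hx : f x = 0
  · have hf0 : Tendsto f (𝓝 x) (𝓝 0) := hx ▸ hf.tendsto x
    simpa [ContinuousAt, hx] using hf0.zero_mul_isBoundedUnder_le (isBoundedUnder_of ⟨C, hC⟩)
  · exact hf.continuousAt.mul (hg x hx)

theorem abs_sub_sub_mul_le_of_lipschitz_deriv {φ φ' : ℝ → ℝ} {C τ : ℝ}
    (hφ : ∀ σ, HasDerivAt φ (φ' σ) σ) (hφ' : ∀ σ, |φ' σ - φ' τ| ≤ C * |σ - τ|) (σ : ℝ) :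
    |φ σ - φ τ - (σ - τ) * φ' τ| ≤ C * (σ - τ) ^ 2 := by
  have hC : 0 ≤ C := by simpa using (abs_nonneg _).trans (hφ' (τ + 1))
  have hderiv : ∀ ρ, HasDerivAt (fun ρ => φ ρ - ρ * φ' τ) (φ' ρ - φ' τ) ρ := fun ρ =>
    ((hφ ρ).sub ((hasDerivAt_id' ρ).mul_const (φ' τ))).congr_deriv (by ring)
  have hmv := Convex.norm_image_sub_le_of_norm_hasDerivWithin_le
    (fun ρ _ => (hderiv ρ).hasDerivWithinAt) (fun ρ hρ => (hφ' ρ).trans <|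
      mul_le_mul_of_nonneg_left (Set.abs_sub_left_of_mem_uIcc hρ) hC)
    (convex_uIcc τ σ) Set.left_mem_uIcc Set.right_mem_uIcc
  calc |φ σ - φ τ - (σ - τ) * φ' τ| = |(φ σ - σ * φ' τ) - (φ τ - τ * φ' τ)| := by ring_nf
    _ ≤ C * |σ - τ| * |σ - τ| := hmv
    _ = C * (σ - τ) ^ 2 := by rw [mul_assoc, abs_mul_abs_self, sq]

/- The kernels are functions of `r = √x`; as `Real.sqrt` vanishes on `(-∞, 0]`, composing
with it reproduces the `if 0 < x` cut-offs of `waveOp` and `cosOp`. -/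

noncomputable def sinKernel (τ r : ℝ) : ℝ := r * Real.sin (τ / r)

noncomputable def cosKernel (τ r : ℝ) : ℝ := r ^ 2 * (1 - Real.cos (τ / r))

noncomputable def cosKernelPrimitive (τ r : ℝ) : ℝ := r ^ 2 * (τ - sinKernel τ r)

@[fun_prop]
theorem continuous_sinKernel (τ : ℝ) : Continuous (sinKernel τ) :=
  continuous_id.mul_of_norm_le_of_continuousAt (C := 1)
    (fun _ hr => by fun_prop (disch := exact hr)) (fun _ => Real.abs_sin_le_one _)

@[fun_prop]
theorem continuous_cosKernel (τ : ℝ) : Continuous (cosKernel τ) :=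
  (continuous_pow 2).mul_of_norm_le_of_continuousAt (C := 2)
    (fun _ hr => by fun_prop (disch := exact pow_ne_zero_iff two_ne_zero |>.1 hr))
    (fun r => by
      rw [Real.norm_eq_abs, abs_le]
      constructor <;> linarith [Real.neg_one_le_cos (τ / r), Real.cos_le_one (τ / r)])

@[fun_prop]
theorem continuous_cosKernelPrimitive (τ : ℝ) : Continuous (cosKernelPrimitive τ) :=
  (continuous_pow 2).mul (continuous_const.sub (continuous_sinKernel τ))

theorem abs_sinKernel_sub_le (σ τ r : ℝ) : |sinKernel σ r - sinKernel τ r| ≤ |σ - τ| := by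
  rcases eq_or_ne r 0 with rfl | hr
  · simp [sinKernel]
  calc |sinKernel σ r - sinKernel τ r| = |r| * |Real.sin (σ / r) - Real.sin (τ / r)| := by
        rw [sinKernel, sinKernel, ← mul_sub, abs_mul]
    _ ≤ |r| * |σ / r - τ / r| := by gcongr |r| * ?_; exact Real.abs_sin_sub_sin_le _ _
    _ = |σ - τ| := by rw [← sub_div, abs_div, mul_div_cancel₀ _ (abs_ne_zero.2 hr)]

theorem abs_cosKernel_sub_le (σ τ r : ℝ) : |cosKernel σ r - cosKernel τ r| ≤ |r| * |σ - τ| := by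
  rcases eq_or_ne r 0 with rfl | hr
  · simp [cosKernel]
  calc |cosKernel σ r - cosKernel τ r| = |r| * (|r| * |Real.cos (τ / r) - Real.cos (σ / r)|) := by
        rw [cosKernel, cosKernel, ← mul_sub, abs_mul, abs_pow, sq, mul_assoc,
          sub_sub_sub_cancel_left]
    _ ≤ |r| * (|r| * |τ / r - σ / r|) := by
        gcongr |r| * (|r| * ?_); exact Real.abs_cos_sub_cos_le _ _
    _ = |r| * |σ - τ| := by
        rw [← sub_div, abs_div, mul_div_cancel₀ _ (abs_ne_zero.2 hr), abs_sub_comm]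

theorem hasDerivAt_cosKernel (τ r : ℝ) : HasDerivAt (cosKernel · r) (sinKernel τ r) τ := by
  rcases eq_or_ne r 0 with rfl | hr
  · simpa [cosKernel, sinKernel] using hasDerivAt_const τ (0 : ℝ)
  exact ((((hasDerivAt_id' τ).div_const r).cos.const_sub 1).const_mul (r ^ 2)).congr_deriv
    (by rw [sinKernel]; field_simp)

theorem hasDerivAt_cosKernelPrimitive (τ r : ℝ) :
    HasDerivAt (cosKernelPrimitive · r) (cosKernel τ r) τ := by
  rcases eq_or_ne r 0 with rfl | hr
  · simpa [cosKernelPrimitive, cosKernel] using hasDerivAt_const τ (0 : ℝ)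
  exact (((hasDerivAt_id' τ).sub ((((hasDerivAt_id' τ).div_const r).sin).const_mul r)).const_mul
    (r ^ 2)).congr_deriv (by rw [cosKernel]; field_simp)

section CFCFamily

variable {A : Type*} [NormedRing A] [StarRing A] [NormedAlgebra ℝ A]
  [IsometricContinuousFunctionalCalculus ℝ A IsSelfAdjoint] {a : A} {φ : ℝ → ℝ → ℝ}

theorem lipschitzWith_cfc {C : NNReal} (hφ : ∀ σ, ContinuousOn (φ σ) (spectrum ℝ a))
    (hlip : ∀ σ τ, ∀ x ∈ spectrum ℝ a, |φ σ x - φ τ x| ≤ C * |σ - τ|) :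
    LipschitzWith C fun σ => cfc (φ σ) a := by
  refine LipschitzWith.of_dist_le_mul fun σ τ => ?_
  rw [dist_eq_norm, ← cfc_sub (φ σ) (φ τ) a, Real.dist_eq]
  exact norm_cfc_le (by positivity) (hlip σ τ)

theorem hasDerivAt_cfc_of_lipschitz_deriv {φ' : ℝ → ℝ → ℝ} {C τ : ℝ}
    (hφ : ∀ σ, ContinuousOn (φ σ) (spectrum ℝ a)) (hφ' : ContinuousOn (φ' τ) (spectrum ℝ a))
    (hderiv : ∀ x ∈ spectrum ℝ a, ∀ σ, HasDerivAt (φ · x) (φ' σ x) σ)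
    (hlip : ∀ x ∈ spectrum ℝ a, ∀ σ, |φ' σ x - φ' τ x| ≤ C * |σ - τ|) :
    HasDerivAt (fun σ => cfc (φ σ) a) (cfc (φ' τ) a) τ := by
  have hbound : ∀ σ, ‖cfc (φ σ) a - cfc (φ τ) a - (σ - τ) • cfc (φ' τ) a‖ ≤ |C| * (σ - τ) ^ 2 := by
    intro σ
    rw [← cfc_sub (φ σ) (φ τ) a, ← cfc_smul (σ - τ) (φ' τ) a, ← cfc_sub _ _ a]
    refine norm_cfc_le (by positivity) fun x hx => ?_
    exact (abs_sub_sub_mul_le_of_lipschitz_deriv (hderiv x hx) (hlip x hx) σ).trans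
      (by gcongr; exact le_abs_self C)
  rw [hasDerivAt_iff_isLittleO]
  refine (Asymptotics.IsBigO.of_bound |C| (Eventually.of_forall fun σ => ?_)).trans_isLittleO
    (Asymptotics.isLittleO_pow_sub_sub τ one_lt_two)
  simpa using hbound σ

end CFCFamily

section KernelOperators

variable (T : H →L[ℂ] H)

/- `T` cannot be factored out of `cosOp T τ`, since `1 - cos (τ / √x)` is discontinuous at
`x = 0`; it can be out of this primitive, since `τ - sinKernel τ (√x)` is continuous. -/
noncomputable def cosPrimitiveOp (τ : ℝ) : H →L[ℂ] H :=
  cfc (fun x => cosKernelPrimitive τ (Real.sqrt x)) T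

theorem waveOp_eq_cfc_sinKernel (τ : ℝ) :
    waveOp T τ = cfc (fun x => sinKernel τ (Real.sqrt x)) T := by
  refine congrArg (cfc · T) (funext fun x => ?_)
  split_ifs with hx
  · rfl
  · simp [sinKernel, Real.sqrt_eq_zero'.2 (not_lt.1 hx)]

theorem cosOp_eq_cfc_cosKernel (τ : ℝ) :
    cosOp T τ = cfc (fun x => cosKernel τ (Real.sqrt x)) T := by
  refine congrArg (cfc · T) (funext fun x => ?_)
  split_ifs with hx
  · rw [cosKernel, Real.sq_sqrt hx.le]
  · simp [cosKernel, Real.sqrt_eq_zero'.2 (not_lt.1 hx)]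

theorem cosOp_zero : cosOp T 0 = 0 := by
  simp [cosOp_eq_cfc_cosKernel, cosKernel]

theorem cosPrimitiveOp_zero : cosPrimitiveOp T 0 = 0 := by
  simp [cosPrimitiveOp, cosKernelPrimitive, sinKernel]

theorem continuous_waveOp : Continuous (waveOp T) := by
  simp_rw [funext (waveOp_eq_cfc_sinKernel T)]
  refine (lipschitzWith_cfc (C := 1) (fun σ => by fun_prop) fun σ τ x _ => ?_).continuous
  simpa using abs_sinKernel_sub_le σ τ (Real.sqrt x)

theorem hasDerivAt_cosOp (τ : ℝ) : HasDerivAt (cosOp T) (waveOp T τ) τ := by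
  simp_rw [funext (cosOp_eq_cfc_cosKernel T), waveOp_eq_cfc_sinKernel]
  refine hasDerivAt_cfc_of_lipschitz_deriv (C := 1) (fun σ => by fun_prop) (by fun_prop)
    (fun x _ σ => hasDerivAt_cosKernel σ (Real.sqrt x)) fun x _ σ => ?_
  simpa using abs_sinKernel_sub_le σ τ (Real.sqrt x)

theorem hasDerivAt_cosPrimitiveOp (τ : ℝ) : HasDerivAt (cosPrimitiveOp T) (cosOp T τ) τ := by
  obtain ⟨M, hM⟩ := (spectrum.isBounded (𝕜 := ℝ) T).exists_norm_le
  rw [cosOp_eq_cfc_cosKernel]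
  refine hasDerivAt_cfc_of_lipschitz_deriv (C := Real.sqrt M) (fun σ => by fun_prop) (by fun_prop)
    (fun x _ σ => hasDerivAt_cosKernelPrimitive σ (Real.sqrt x)) fun x hx σ => ?_
  refine (abs_cosKernel_sub_le σ τ _).trans (mul_le_mul_of_nonneg_right ?_ (abs_nonneg _))
  rw [abs_of_nonneg (Real.sqrt_nonneg x)]
  exact Real.sqrt_le_sqrt ((le_abs_self x).trans (hM x hx))

variable {T}

theorem cosPrimitiveOp_eq_mul (hT : 0 ≤ T) (τ : ℝ) :
    cosPrimitiveOp T τ = T * (algebraMap ℝ (H →L[ℂ] H) τ - waveOp T τ) := by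
  have hsq : ∀ x ∈ spectrum ℝ T,
      cosKernelPrimitive τ (Real.sqrt x) = x * (τ - sinKernel τ (Real.sqrt x)) := fun x hx => by
    rw [cosKernelPrimitive, Real.sq_sqrt (spectrum_nonneg_of_nonneg hT hx)]
  rw [cosPrimitiveOp, cfc_congr hsq, cfc_mul (fun x => x) _ T, cfc_id' ℝ T,
    cfc_sub (fun _ => τ) _ T, cfc_const τ T, waveOp_eq_cfc_sinKernel]

end KernelOperators

theorem integral_deriv_comp_sub_apply_eq {𝕜 E F : Type*} [NontriviallyNormedField 𝕜]
    [NormedAlgebra ℝ 𝕜] [NormedAddCommGroup E] [NormedSpace 𝕜 E] [NormedSpace ℝ E]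
    [IsScalarTower ℝ 𝕜 E] [NormedAddCommGroup F] [NormedSpace 𝕜 F] [NormedSpace ℝ F]
    [IsScalarTower ℝ 𝕜 F] [CompleteSpace F] {B B' : ℝ → E →L[𝕜] F} {g g' : ℝ → E}
    (hB : ∀ τ, HasDerivAt B (B' τ) τ) (hB' : Continuous B') (hB0 : B 0 = 0)
    (hg : ∀ s, HasDerivAt g (g' s) s) (hg' : Continuous g') (hg0 : g 0 = 0) (t : ℝ) :
    ∫ s in (0 : ℝ)..t, B' (t - s) (g s) = ∫ s in (0 : ℝ)..t, B (t - s) (g' s) := by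
  have hBc : Continuous B := continuous_iff_continuousAt.2 fun τ => (hB τ).continuousAt
  have hgc : Continuous g := continuous_iff_continuousAt.2 fun s => (hg s).continuousAt
  have hderiv : ∀ s, HasDerivAt (fun s => B (t - s) (g s))
      (B (t - s) (g' s) - B' (t - s) (g s)) s := fun s => by
    have hBs : HasDerivAt (fun s => B (t - s)) (-B' (t - s)) s :=
      ((hB (t - s)).scomp s ((hasDerivAt_id' s).const_sub t)).congr_deriv (by simp)
    have := ((ContinuousLinearMap.restrictScalarsL 𝕜 E F ℝ ℝ).hasFDerivAt.comp_hasDerivAt s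
      hBs).clm_apply (hg s)
    simpa [sub_eq_neg_add] using this
  have hint1 : IntervalIntegrable (fun s => B' (t - s) (g s)) volume 0 t :=
    ((hB'.comp (continuous_sub_left t)).clm_apply hgc).intervalIntegrable 0 t
  have hint2 : IntervalIntegrable (fun s => B (t - s) (g' s)) volume 0 t :=
    ((hBc.comp (continuous_sub_left t)).clm_apply hg').intervalIntegrable 0 t
  have hFTC := intervalIntegral.integral_eq_sub_of_hasDerivAt (fun s _ => hderiv s)
    (hint2.sub hint1)
  rw [intervalIntegral.integral_sub hint2 hint1, sub_self, hB0, hg0, map_zero,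
    zero_apply, sub_zero] at hFTC
  exact (sub_eq_zero.1 hFTC).symm

theorem ContDiff.hasDerivAt_iterate_deriv {E : Type*} [NormedAddCommGroup E] [NormedSpace ℝ E]
    {f : ℝ → E} (hf : ContDiff ℝ (⊤ : ℕ∞) f) (n : ℕ) (s : ℝ) :
    HasDerivAt (deriv^[n] f) (deriv^[n + 1] f s) s := by
  rw [Function.iterate_succ_apply']
  exact ((hf.iterate_deriv n).differentiable (by simp) s).hasDerivAt

theorem Filter.EventuallyEq.iterate_deriv_eq_zero {E : Type*} [NormedAddCommGroup E]
    [NormedSpace ℝ E] {f : ℝ → E} {a : ℝ} (hf : f =ᶠ[𝓝 a] 0) (n : ℕ) : deriv^[n] f a = 0 := by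
  suffices deriv^[n] f =ᶠ[𝓝 a] 0 from this.eq_of_nhds
  induction n with
  | zero => exact hf
  | succ n ih => simpa [Function.iterate_succ_apply'] using ih.deriv

theorem integral_cosPrimitiveOp_apply_mem_range {T : H →L[ℂ] H} (hT : 0 ≤ T) {g : ℝ → H}
    (hg : Continuous g) (t : ℝ) :
    ∫ s in (0 : ℝ)..t, cosPrimitiveOp T (t - s) (g s) ∈ Set.range T := by
  have hint : IntervalIntegrable
      (fun s => (algebraMap ℝ (H →L[ℂ] H) (t - s) - waveOp T (t - s)) (g s)) volume 0 t := by
    refine (Continuous.clm_apply ?_ hg).intervalIntegrable 0 t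
    exact ((continuous_algebraMap ℝ _).sub (continuous_waveOp T)).comp (continuous_sub_left t)
  simp_rw [cosPrimitiveOp_eq_mul hT, mul_apply_eq_comp,
    T.intervalIntegral_comp_comm hint]
  exact Set.mem_range_self _

theorem stmt3_general (L₀ L : H →ₗ.[ℂ] H) (T : H →L[ℂ] H) (K : Submodule ℂ H)
    (hs : Setting L₀ L T K)
    (f : ℝ → H) (hf : IsSmoothControl K f) (t : ℝ) :
    wave T f t = -f t + ∫ s in (0:ℝ)..t, cosOp T (t - s) (deriv (deriv (deriv f)) s) ∧
    (∫ s in (0:ℝ)..t, cosOp T (t - s) (deriv (deriv (deriv f)) s)) ∈ L.domain := by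
  obtain ⟨hsmooth, -, ε, hε, hf0⟩ := hf
  have hvanish : f =ᶠ[𝓝 0] 0 := by
    filter_upwards [Iio_mem_nhds hε] with s hsε using hf0 s hsε.le
  have hT : 0 ≤ T := (ContinuousLinearMap.nonneg_iff_isPositive T).2
    ⟨hs.T_selfadjoint.isSymmetric, hs.T_positive⟩
  have hcont : ∀ n, Continuous (deriv^[n] f) := fun n => (hsmooth.iterate_deriv n).continuous
  have hwave_eq_cos : ∫ s in (0 : ℝ)..t, waveOp T (t - s) (deriv (deriv f) s) =
      ∫ s in (0 : ℝ)..t, cosOp T (t - s) (deriv (deriv (deriv f)) s) :=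
    integral_deriv_comp_sub_apply_eq (hasDerivAt_cosOp T) (continuous_waveOp T) (cosOp_zero T)
      (hsmooth.hasDerivAt_iterate_deriv 2) (hcont 3) (hvanish.iterate_deriv_eq_zero 2) t
  have hcos_eq_primitive : ∫ s in (0 : ℝ)..t, cosOp T (t - s) (deriv (deriv (deriv f)) s) =
      ∫ s in (0 : ℝ)..t, cosPrimitiveOp T (t - s) (deriv^[4] f s) :=
    integral_deriv_comp_sub_apply_eq (hasDerivAt_cosPrimitiveOp T)
      (continuous_iff_continuousAt.2 fun τ => (hasDerivAt_cosOp T τ).continuousAt)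
      (cosPrimitiveOp_zero T) (hsmooth.hasDerivAt_iterate_deriv 3) (hcont 4)
      (hvanish.iterate_deriv_eq_zero 3) t
  refine ⟨congrArg (-f t + ·) hwave_eq_cos, ?_⟩
  obtain ⟨y, hy⟩ := integral_cosPrimitiveOp_apply_mem_range hT (hcont 4) t
  rw [hcos_eq_primitive, ← hy]
  exact hs.T_mem_domain y

/-- For every `f ∈ M` and `t ≥ 0`,
`u^f(t) = −f(t) + ∫₀ᵗ k_{t−s}(T) f'''(s) ds`, and the integral summand belongs to `dom L`. -/
theorem stmt3 (L₀ L : H →ₗ.[ℂ] H) (T : H →L[ℂ] H) (K : Submodule ℂ H)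
    [Submodule.HasOrthogonalProjection K] (hs : Setting L₀ L T K)
    (f : ℝ → H) (hf : IsSmoothControl K f) (t : ℝ) (ht : 0 ≤ t) :
    wave T f t = -f t + ∫ s in (0:ℝ)..t, cosOp T (t - s) (deriv (deriv (deriv f)) s) ∧
    (∫ s in (0:ℝ)..t, cosOp T (t - s) (deriv (deriv (deriv f)) s)) ∈ L.domain :=
  stmt3_general L₀ L T K hs f hf t
end

section
/- Let σ > 0 and let y ∈ dom L satisfy y ∈ closure(U) and ⟨y, u⟩ = 0 for all u ∈ U^σ. Then P(Iᵗ(Ly)) = 0 for all 0 ≤ t ≤ σ (since Iᵗy ∈ dom L with L(Iᵗy) = Iᵗ(Ly), this says that Γ₂ of the trajectory v^y(t) := Iᵗy vanishes on [0,σ]). -/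
open MeasureTheory
open scoped ComplexInnerProductSpace

variable {H : Type*} [NormedAddCommGroup H] [InnerProductSpace ℂ H] [CompleteSpace H]

/-!
Write `z = L y`, so that `y = T z`. For `k ∈ K` and a real test function `φ` supported in
`(0, σ)`, the control `φ • k` is admissible, and `y ⊥ u^{φ • k}(σ)` reads
`∫₀^σ φ''(s) ⟪T I^{σ-s} z, k⟫ ds = 0`. Now `T Iᵗ = L^{-3/2} sin(t L^{1/2})` has second
`t`-derivative `-Iᵗ`, so two integrations by parts give `∫₀^σ φ(s) ⟪I^{σ-s} z, k⟫ ds = 0`. By the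
fundamental lemma of the calculus of variations `⟪Iᵗ z, k⟫ = 0` for `0 ≤ t ≤ σ`, i.e. `Iᵗ z ∈ Kᗮ`.
-/

open Set
open scoped ContDiff

theorem abs_sub_sub_mul_le_sq {f f' : ℝ → ℝ} (hf : ∀ x, HasDerivAt f (f' x) x)
    (hf' : LipschitzWith 1 f') (u h : ℝ) : |f (u + h) - f u - h * f' u| ≤ h ^ 2 := by
  have hderiv : ∀ v ∈ uIcc 0 h, HasDerivWithinAt (fun v => f (u + v) - v * f' u)
      (f' (u + v) - f' u) (uIcc 0 h) v := fun v _ =>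
    (((hf (u + v)).comp_const_add u v).sub
      ((hasDerivAt_id' v).mul_const (f' u))).hasDerivWithinAt.congr_deriv (by ring)
  have hbound : ∀ v ∈ uIcc 0 h, ‖f' (u + v) - f' u‖ ≤ |h| := fun v hv => by
    have := hf'.dist_le_mul (u + v) u
    have hv' := abs_sub_left_of_mem_uIcc hv
    simp only [NNReal.coe_one, one_mul, Real.dist_eq, add_sub_cancel_left, sub_zero] at this hv'
    exact this.trans hv'
  have := (convex_uIcc 0 h).norm_image_sub_le_of_norm_hasDerivWithin_le hderiv hbound
    left_mem_uIcc right_mem_uIcc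
  simp only [Real.norm_eq_abs, add_zero, zero_mul, sub_zero, sub_right_comm _ (h * f' u),
    abs_mul_abs_self] at this
  simpa [sq] using this

open Asymptotics in
theorem hasDerivAt_of_norm_sub_sub_le_sq {E : Type*} [NormedAddCommGroup E] [NormedSpace ℝ E]
    {F : ℝ → E} {F' : E} {t C : ℝ} (hF : ∀ s, ‖F s - F t - (s - t) • F'‖ ≤ C * (s - t) ^ 2) :
    HasDerivAt F F' t := by
  rw [hasDerivAt_iff_isLittleO]
  have hsq : (fun s => C * (s - t) ^ 2) =o[nhds t] (fun s => s - t) := by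
    have h1 : (fun s => s - t) =o[nhds t] (fun _ => (1 : ℝ)) := by
      rw [isLittleO_one_iff]
      simpa using (continuous_sub_right t).tendsto t
    simpa [sq, mul_assoc] using (h1.mul_isBigO (isBigO_refl _ _)).const_mul_left C
  exact (isBigO_of_le _ fun s => (hF s).trans (le_abs_self _)).trans_isLittleO hsq

theorem intervalIntegral_deriv_deriv_smul_eq {E : Type*} [NormedAddCommGroup E] [NormedSpace ℝ E]
    [CompleteSpace E] {φ : ℝ → ℝ} {v v' v'' : ℝ → E} {a b : ℝ} (hφ : ContDiff ℝ 2 φ)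
    (ha : a ∉ tsupport φ) (hb : b ∉ tsupport φ) (hv : ∀ x, HasDerivAt v (v' x) x)
    (hv' : ∀ x, HasDerivAt v' (v'' x) x) (hv'' : Continuous v'') :
    ∫ x in a..b, deriv (deriv φ) x • v x = ∫ x in a..b, φ x • v'' x := by
  have hφ' : ContDiff ℝ 1 (deriv φ) := (contDiff_succ_iff_deriv.1 hφ).2.2
  have hφ'' : Continuous (deriv (deriv φ)) := hφ'.continuous_deriv le_rfl
  have hv'c : Continuous v' := continuous_iff_continuousAt.2 fun x => (hv' x).continuousAt
  have hvan : ∀ x ∉ tsupport φ, φ x = 0 ∧ deriv φ x = 0 := fun x hx =>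
    ⟨image_eq_zero_of_notMem_tsupport hx,
      image_eq_zero_of_notMem_tsupport fun h => hx (tsupport_deriv_subset h)⟩
  have ibp₁ := intervalIntegral.integral_smul_deriv_eq_deriv_smul (a := a) (b := b)
    (fun x _ => (hφ.differentiable two_ne_zero x).hasDerivAt) (fun x _ => hv' x)
    (hφ'.continuous.intervalIntegrable a b) (hv''.intervalIntegrable a b)
  have ibp₂ := intervalIntegral.integral_smul_deriv_eq_deriv_smul (a := a) (b := b)
    (fun x _ => (hφ'.differentiable one_ne_zero x).hasDerivAt) (fun x _ => hv x)
    (hφ''.intervalIntegrable a b) (hv'c.intervalIntegrable a b)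
  rw [ibp₁, ibp₂, (hvan a ha).1, (hvan b hb).1, (hvan a ha).2, (hvan b hb).2]
  simp

theorem HasCompactSupport.exists_gt_forall_le_eq_zero {E : Type*} [Zero E]
    {φ : ℝ → E} {a : ℝ} (hφ : HasCompactSupport φ) (h : tsupport φ ⊆ Ioi a) :
    ∃ ε > a, ∀ t ≤ ε, φ t = 0 := by
  rcases (tsupport φ).eq_empty_or_nonempty with he | hne
  · exact ⟨a + 1, by linarith, fun t _ => image_eq_zero_of_notMem_tsupport (by simp [he])⟩
  obtain ⟨m, hm, hmin⟩ := hφ.isCompact.exists_isMinOn hne continuousOn_id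
  have ham : a < m := h hm
  refine ⟨(a + m) / 2, by linarith, fun t ht => image_eq_zero_of_notMem_tsupport fun htφ => ?_⟩
  have : m ≤ t := hmin htφ
  linarith

theorem eqOn_zero_of_forall_intervalIntegral_smul_eq_zero {E : Type*} [NormedAddCommGroup E]
    [NormedSpace ℝ E] [CompleteSpace E] {g : ℝ → E} (hg : Continuous g) {a b : ℝ} (hab : a < b)
    (h : ∀ φ : ℝ → ℝ, ContDiff ℝ ∞ φ → HasCompactSupport φ → tsupport φ ⊆ Ioo a b →
      ∫ x in a..b, φ x • g x = 0) :
    EqOn g 0 (Icc a b) := by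
  have hae : ∀ᵐ x, x ∈ Ioo a b → g x = 0 := by
    refine isOpen_Ioo.ae_eq_zero_of_integral_contDiff_smul_eq_zero
      (hg.locallyIntegrable.locallyIntegrableOn _) fun φ hφ hφc hφU => ?_
    rw [← h φ hφ hφc hφU, intervalIntegral.integral_of_le hab.le,
      setIntegral_eq_integral_of_forall_compl_eq_zero]
    intro x hx
    rw [image_eq_zero_of_notMem_tsupport fun hxφ => hx (Ioo_subset_Ioc_self (hφU hxφ)), zero_smul]
  have hIoo : EqOn g 0 (Ioo a b) :=
    Measure.eqOn_open_of_ae_eq ((ae_restrict_iff' measurableSet_Ioo).2 hae) isOpen_Ioo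
      hg.continuousOn continuousOn_const
  rw [← closure_Ioo hab.ne]
  exact hIoo.of_subset_closure hg.continuousOn continuousOn_const subset_closure subset_rfl

theorem hasDerivAt_inner_apply {E : Type*} [NormedAddCommGroup E] [InnerProductSpace ℂ E]
    {F : ℝ → E →L[ℂ] E} {F' : E →L[ℂ] E} {t : ℝ}
    (hF : HasDerivAt F F' t) (z k : E) :
    HasDerivAt (fun s => ⟪F s z, k⟫) ⟪F' z, k⟫ t := by
  have hFz := ((ContinuousLinearMap.apply ℂ E z).restrictScalars ℝ).hasFDerivAt.comp_hasDerivAt t hF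
  exact hFz.inner ℂ (hasDerivAt_const t k) |>.congr_deriv (by simp)

/-- `cfc (trigSymbol n w t) T` is formally `L^{-n/2} w(t L^{1/2})`. Since `√x = 0` for `x ≤ 0`
(and `t / 0 = 0`), the symbol vanishes there once `n ≥ 1`. -/
noncomputable def trigSymbol (n : ℕ) (w : ℝ → ℝ) (t x : ℝ) : ℝ := √x ^ n * w (t / √x)

theorem continuous_trigSymbol {w : ℝ → ℝ} {M : ℝ} (hw : Continuous w) (hwM : ∀ u, |w u| ≤ M)
    (n : ℕ) (t : ℝ) : Continuous (trigSymbol (n + 1) w t) := by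
  refine continuous_iff_continuousAt.2 fun x₀ => ?_
  by_cases hx₀ : √x₀ = 0
  · have hlim : Filter.Tendsto (fun x => √x ^ (n + 1) * M) (nhds x₀) (nhds 0) := by
      have hcont : Continuous fun x => √x ^ (n + 1) * M := by fun_prop
      simpa [hx₀] using hcont.tendsto x₀
    rw [ContinuousAt, show trigSymbol (n + 1) w t x₀ = 0 by simp [trigSymbol, hx₀]]
    refine squeeze_zero_norm (fun x => ?_) hlim
    rw [trigSymbol, Real.norm_eq_abs, abs_mul, abs_of_nonneg (by positivity)]
    exact mul_le_mul_of_nonneg_left (hwM _) (by positivity)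
  · exact ((Real.continuous_sqrt.pow _).continuousAt).mul
      (hw.continuousAt.comp (continuousAt_const.div Real.continuous_sqrt.continuousAt hx₀))

theorem abs_trigSymbol_sub_le {w : ℝ → ℝ} (hw : LipschitzWith 1 w) (n : ℕ) (s t x : ℝ) :
    |trigSymbol (n + 1) w s x - trigSymbol (n + 1) w t x| ≤ √x ^ n * |s - t| := by
  rcases (Real.sqrt_nonneg x).eq_or_lt with hr | hr
  · simp [trigSymbol, ← hr]; positivity
  have hw' : |w (s / √x) - w (t / √x)| ≤ |s - t| / √x := by
    simpa [Real.dist_eq, ← sub_div, abs_div, abs_of_pos hr] using hw.dist_le_mul (s / √x) (t / √x)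
  calc |trigSymbol (n + 1) w s x - trigSymbol (n + 1) w t x|
      = √x ^ (n + 1) * |w (s / √x) - w (t / √x)| := by
        rw [trigSymbol, trigSymbol, ← mul_sub, abs_mul, abs_of_pos (by positivity)]
    _ ≤ √x ^ (n + 1) * (|s - t| / √x) := by gcongr
    _ = √x ^ n * |s - t| := by field_simp; ring

theorem abs_trigSymbol_sub_sub_le {w w' : ℝ → ℝ} (hw : ∀ u, HasDerivAt w (w' u) u)
    (hw' : LipschitzWith 1 w') (n : ℕ) (s t x : ℝ) :
    |trigSymbol (n + 2) w s x - trigSymbol (n + 2) w t x - (s - t) * trigSymbol (n + 1) w' t x|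
      ≤ √x ^ n * (s - t) ^ 2 := by
  rcases (Real.sqrt_nonneg x).eq_or_lt with hr | hr
  · simp [trigSymbol, ← hr]; positivity
  have key := abs_sub_sub_mul_le_sq hw hw' (t / √x) ((s - t) / √x)
  rw [← add_div, add_sub_cancel] at key
  have hexp : trigSymbol (n + 2) w s x - trigSymbol (n + 2) w t x
      - (s - t) * trigSymbol (n + 1) w' t x
      = √x ^ (n + 2) * (w (s / √x) - w (t / √x) - (s - t) / √x * w' (t / √x)) := by
    simp only [trigSymbol]; field_simp; ring
  calc _ = √x ^ (n + 2) * |w (s / √x) - w (t / √x) - (s - t) / √x * w' (t / √x)| := by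
        rw [hexp, abs_mul, abs_of_pos (by positivity)]
    _ ≤ √x ^ (n + 2) * ((s - t) / √x) ^ 2 := by gcongr
    _ = √x ^ n * (s - t) ^ 2 := by field_simp; ring

theorem continuous_trigSymbol_sin (n : ℕ) (t : ℝ) : Continuous (trigSymbol (n + 1) Real.sin t) :=
  continuous_trigSymbol Real.continuous_sin Real.abs_sin_le_one n t

theorem continuous_trigSymbol_cos (n : ℕ) (t : ℝ) : Continuous (trigSymbol (n + 1) Real.cos t) :=
  continuous_trigSymbol Real.continuous_cos Real.abs_cos_le_one n t

section CFC

variable {A : Type*} [CStarAlgebra A]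

theorem hasDerivAt_cfc_of_sq_bound {f : ℝ → ℝ → ℝ} {f' : ℝ → ℝ} {a : A} {t C : ℝ}
    (hf : ∀ s, ContinuousOn (f s) (spectrum ℝ a)) (hf' : ContinuousOn f' (spectrum ℝ a))
    (hbound : ∀ s, ∀ x ∈ spectrum ℝ a, |f s x - f t x - (s - t) * f' x| ≤ C * (s - t) ^ 2) :
    HasDerivAt (fun s => cfc (f s) a) (cfc f' a) t := by
  refine hasDerivAt_of_norm_sub_sub_le_sq (C := |C|) fun s => ?_
  rw [← cfc_smul .., ← cfc_sub .., ← cfc_sub ..]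
  refine norm_cfc_le (by positivity) fun x hx => ?_
  rw [Real.norm_eq_abs]
  exact (hbound s x hx).trans (by gcongr; exact le_abs_self C)

theorem lipschitzWith_cfc_s13 {f : ℝ → ℝ → ℝ} {a : A} {K : NNReal}
    (hf : ∀ s, ContinuousOn (f s) (spectrum ℝ a))
    (hbound : ∀ s t, ∀ x ∈ spectrum ℝ a, |f s x - f t x| ≤ K * |s - t|) :
    LipschitzWith K fun s => cfc (f s) a := by
  refine LipschitzWith.of_dist_le_mul fun s t => ?_
  rw [dist_eq_norm, ← cfc_sub .., Real.dist_eq]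
  exact norm_cfc_le (by positivity) fun x hx => hbound s t x hx

end CFC

theorem waveOp_eq_cfc (T : H →L[ℂ] H) (t : ℝ) : waveOp T t = cfc (trigSymbol 1 Real.sin t) T := by
  unfold waveOp
  congr 1
  funext x
  split_ifs with hx
  · simp [trigSymbol]
  · simp [trigSymbol, Real.sqrt_eq_zero'.mpr (not_lt.mp hx)]

noncomputable def waveCosOp (T : H →L[ℂ] H) (t : ℝ) : H →L[ℂ] H := cfc (trigSymbol 2 Real.cos t) T

noncomputable def waveSinOp (T : H →L[ℂ] H) (t : ℝ) : H →L[ℂ] H := cfc (trigSymbol 3 Real.sin t) T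

theorem isSelfAdjoint_waveOp (T : H →L[ℂ] H) (t : ℝ) : IsSelfAdjoint (waveOp T t) := by
  rw [waveOp_eq_cfc]
  exact cfc_predicate _ T

theorem waveOp_mul_eq_waveSinOp (T : H →L[ℂ] H) (hT : IsSelfAdjoint T) (t : ℝ) :
    waveOp T t * T = waveSinOp T t := by
  have hsymb : (fun x => trigSymbol 1 Real.sin t x * x) = trigSymbol 3 Real.sin t := by
    funext x
    rcases le_total x 0 with hx | hx
    · simp [trigSymbol, Real.sqrt_eq_zero'.mpr hx]
    · simp only [trigSymbol]
      rw [show √x ^ 3 = √x ^ 2 * √x by ring, Real.sq_sqrt hx]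
      ring
  rw [waveOp_eq_cfc, waveSinOp, ← hsymb,
    cfc_mul _ _ T (continuous_trigSymbol_sin 0 t).continuousOn, cfc_id' ℝ T]

theorem lipschitzWith_waveOp (T : H →L[ℂ] H) : LipschitzWith 1 (waveOp T) := by
  rw [show waveOp T = fun s => cfc (trigSymbol 1 Real.sin s) T from funext (waveOp_eq_cfc T)]
  exact lipschitzWith_cfc_s13 (fun s => (continuous_trigSymbol_sin 0 s).continuousOn)
    fun s t x _ => by simpa using abs_trigSymbol_sub_le Real.lipschitzWith_sin 0 s t x

theorem continuous_waveOp_apply (T : H →L[ℂ] H) (z : H) : Continuous fun t => waveOp T t z :=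
  (lipschitzWith_waveOp T).continuous.clm_apply continuous_const

theorem hasDerivAt_waveSinOp (T : H →L[ℂ] H) (t : ℝ) :
    HasDerivAt (waveSinOp T) (waveCosOp T t) t := by
  obtain ⟨R, hR⟩ := (ContinuousFunctionalCalculus.isCompact_spectrum (R := ℝ) T).bddAbove
  refine hasDerivAt_cfc_of_sq_bound (C := √R)
    (fun s => (continuous_trigSymbol_sin 2 s).continuousOn)
    (continuous_trigSymbol_cos 1 t).continuousOn fun s x hx => ?_
  refine (abs_trigSymbol_sub_sub_le Real.hasDerivAt_sin Real.lipschitzWith_cos 1 s t x).trans ?_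
  gcongr
  simpa using Real.sqrt_le_sqrt (hR hx)

theorem hasDerivAt_waveCosOp (T : H →L[ℂ] H) (t : ℝ) :
    HasDerivAt (waveCosOp T) (-waveOp T t) t := by
  rw [waveOp_eq_cfc, ← cfc_neg ..]
  refine hasDerivAt_cfc_of_sq_bound (C := 1)
    (fun s => (continuous_trigSymbol_cos 1 s).continuousOn)
    (continuous_trigSymbol_sin 0 t).neg.continuousOn fun s x _ => ?_
  have := abs_trigSymbol_sub_sub_le Real.hasDerivAt_cos Real.lipschitzWith_sin.neg 0 s t x
  simpa [trigSymbol] using this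

theorem isSmoothControl_smul {E : Type*} [NormedAddCommGroup E] [InnerProductSpace ℂ E]
    {K : Submodule ℂ E} {k : E} (hk : k ∈ K) {φ : ℝ → ℝ}
    (hφ : ContDiff ℝ ∞ φ) (hφc : HasCompactSupport φ) (hφ0 : tsupport φ ⊆ Ioi 0) :
    IsSmoothControl K fun t => φ t • k := by
  obtain ⟨ε, hε, hφε⟩ := hφc.exists_gt_forall_le_eq_zero hφ0
  exact ⟨hφ.smul contDiff_const, fun t => K.smul_of_tower_mem (φ t) hk, ε, hε,
    fun t ht => by simp [hφε t ht]⟩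

theorem wave_smul_const (T : H →L[ℂ] H) {φ : ℝ → ℝ} (hφ : ContDiff ℝ 2 φ) (k : H) (σ : ℝ) :
    wave T (fun t => φ t • k) σ
      = -(φ σ • k) + ∫ s in (0 : ℝ)..σ, deriv (deriv φ) s • waveOp T (σ - s) k := by
  have hφ' : ContDiff ℝ 1 (deriv φ) := (contDiff_succ_iff_deriv.1 hφ).2.2
  have hd₁ : deriv (fun t => φ t • k) = fun t => deriv φ t • k :=
    funext fun t => deriv_smul_const (hφ.differentiable two_ne_zero t) k
  have hd₂ : deriv (fun t => deriv φ t • k) = fun t => deriv (deriv φ) t • k :=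
    funext fun t => deriv_smul_const (hφ'.differentiable one_ne_zero t) k
  simp only [wave, hd₁, hd₂, ContinuousLinearMap.map_smul_of_tower]

theorem intervalIntegral_smul_inner_waveOp_eq_zero {T : H →L[ℂ] H} (hT : IsSelfAdjoint T)
    {K : Submodule ℂ H} {σ : ℝ} (hσ0 : 0 ≤ σ) {z : H}
    (horth : ∀ u ∈ reachSet K T σ, ⟪T z, u⟫ = 0) {k : H} (hk : k ∈ K) {φ : ℝ → ℝ}
    (hφ : ContDiff ℝ ∞ φ) (hφc : HasCompactSupport φ) (hφU : tsupport φ ⊆ Ioo 0 σ) :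
    ∫ s in (0 : ℝ)..σ, φ s • ⟪waveOp T (σ - s) z, k⟫ = 0 := by
  have hφ2 : ContDiff ℝ 2 φ := contDiff_infty.1 hφ 2
  have h0 : 0 ∉ tsupport φ := fun h => lt_irrefl _ (hφU h).1
  have hσφ : σ ∉ tsupport φ := fun h => lt_irrefl _ (hφU h).2
  have hmem : wave T (fun t => φ t • k) σ ∈ reachSet K T σ := by
    rw [reachSet, if_pos hσ0]
    exact ⟨_, isSmoothControl_smul hk hφ hφc (hφU.trans Ioo_subset_Ioi_self), rfl⟩
  have hadj : ∀ s, ⟪T z, waveOp T s k⟫ = ⟪waveSinOp T s z, k⟫ := fun s => by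
    rw [← waveOp_mul_eq_waveSinOp T hT]
    exact ((isSelfAdjoint_waveOp T s).isSymmetric (T z) k).symm
  have hcont : Continuous fun s => ⟪waveOp T (σ - s) z, k⟫ :=
    ((continuous_waveOp_apply T z).comp (continuous_sub_left σ)).inner continuous_const
  have hibp := intervalIntegral_deriv_deriv_smul_eq hφ2 h0 hσφ
    (v := fun s => ⟪waveSinOp T (σ - s) z, k⟫) (v'' := fun s => -⟪waveOp T (σ - s) z, k⟫)
    (fun s => hasDerivAt_inner_apply ((hasDerivAt_waveSinOp T (σ - s)).comp_const_sub σ s) z k)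
    (fun s => (hasDerivAt_inner_apply
      ((hasDerivAt_waveCosOp T (σ - s)).comp_const_sub σ s).neg z k).congr_deriv (by simp))
    hcont.neg
  have hint : IntervalIntegrable (fun s => deriv (deriv φ) s • waveOp T (σ - s) k) volume 0 σ :=
    ((hφ.iterate_deriv 2).continuous.smul
      ((continuous_waveOp_apply T k).comp (continuous_sub_left σ))).intervalIntegrable 0 σ
  have horth' := horth _ hmem
  rw [wave_smul_const T hφ2, image_eq_zero_of_notMem_tsupport hσφ, zero_smul, neg_zero, zero_add,
    ← innerSL_apply_apply ℂ, ← (innerSL ℂ (T z)).intervalIntegral_comp_comm hint] at horth'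
  simp only [innerSL_apply_apply, inner_smul_right_eq_smul, hadj, hibp, smul_neg,
    intervalIntegral.integral_neg, neg_eq_zero] at horth'
  exact horth'

theorem waveOp_apply_mem_orthogonal {T : H →L[ℂ] H} (hT : IsSelfAdjoint T) {K : Submodule ℂ H}
    {σ : ℝ} (hσ : 0 < σ) {z : H} (horth : ∀ u ∈ reachSet K T σ, ⟪T z, u⟫ = 0) {t : ℝ}
    (ht : t ∈ Icc 0 σ) : waveOp T t z ∈ Kᗮ := by
  rw [Submodule.mem_orthogonal']
  intro k hk
  have hcont : Continuous fun s => ⟪waveOp T (σ - s) z, k⟫ :=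
    ((continuous_waveOp_apply T z).comp (continuous_sub_left σ)).inner continuous_const
  have hzero := eqOn_zero_of_forall_intervalIntegral_smul_eq_zero hcont hσ
    (fun φ hφ hφc hφU => intervalIntegral_smul_inner_waveOp_eq_zero hT hσ.le horth hk hφ hφc hφU)
    (x := σ - t) ⟨by linarith [ht.2], by linarith [ht.1]⟩
  simpa using hzero

theorem stmt13_general (L₀ L : H →ₗ.[ℂ] H) (T : H →L[ℂ] H) (K : Submodule ℂ H)
    [K.HasOrthogonalProjection] (hs : Setting L₀ L T K)
    (σ : ℝ) (hσ : 0 < σ) (y : H) (hy : y ∈ L.domain)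
    (hyorth : ∀ u ∈ reachSet K T σ, ⟪y, u⟫ = 0) :
    ∀ t : ℝ, 0 ≤ t → t ≤ σ →
      (K.orthogonalProjectionOnto (waveOp T t (L ⟨y, hy⟩)) : H) = 0 := by
  intro t ht htσ
  have hyz : T (L ⟨y, hy⟩) = y := hs.T_inv_left ⟨y, hy⟩
  rw [Submodule.orthogonalProjectionOnto_eq_zero_iff.2 (waveOp_apply_mem_orthogonal
    hs.T_selfadjoint hσ (by rwa [hyz]) ⟨ht, htσ⟩), Submodule.coe_zero]

/-- Let `σ > 0` and let `y ∈ dom L` satisfy `y ∈ closure(U)` and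
`⟨y, u⟩ = 0` for all `u ∈ U^σ`.  Then `P(Iᵗ(Ly)) = 0` for all `0 ≤ t ≤ σ`
(`Γ₂` of the trajectory `v^y(t) = Iᵗy` vanishes on `[0,σ]`). -/
theorem stmt13 (L₀ L : H →ₗ.[ℂ] H) (T : H →L[ℂ] H) (K : Submodule ℂ H)
    [K.HasOrthogonalProjection] (hs : Setting L₀ L T K)
    (σ : ℝ) (hσ : 0 < σ) (y : H) (hy : y ∈ L.domain)
    (hyU : y ∈ closure (reachSpan K T : Set H))
    (hyorth : ∀ u ∈ reachSet K T σ, ⟪y, u⟫ = 0) :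
    ∀ t : ℝ, 0 ≤ t → t ≤ σ →
      (K.orthogonalProjectionOnto (waveOp T t (L ⟨y, hy⟩)) : H) = 0 :=
  stmt13_general L₀ L T K hs σ hσ y hy hyorth
end
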